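/- arXiv:2505.22439 — 2 statements merged into one kernel-verified Lean document; each statement's English description precedes it below -/
import Mathlib

section
/- For y in the open unit ball B^{n+1}, the map F_y : S^n → S^n defined by F_y(x) = ((1-|y|^2)/|x+y|^2)(x+y) + y is a bijection of the unit sphere, with F_0 equal to the identity. -/
/-!
`F_y` is inverted by `F_{-y}`: `F_y x - y` is a nonzero multiple `c (x + y)` of `x + y`, and
`F_{-y}` rescales it back by `1 / c`. That `F_y` preserves the sphere is the identity
`‖F_y x‖² = c ‖x + y‖² + ‖y‖² = 1`, obtained by expanding with `‖x‖ = 1`.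
-/

open scoped RealInnerProductSpace

open Metric Set

section SphereShift

variable {E : Type*} [NormedAddCommGroup E] [InnerProductSpace ℝ E]

noncomputable def sphereShift (y x : E) : E :=
  ((1 - ‖y‖ ^ 2) / ‖x + y‖ ^ 2) • (x + y) + y

omit [InnerProductSpace ℝ E] in
lemma add_ne_zero_of_norm_lt {x y : E} (h : ‖y‖ < ‖x‖) : x + y ≠ 0 := by
  intro hxy
  rw [add_eq_zero_iff_eq_neg.mp hxy, norm_neg] at h
  exact lt_irrefl _ h

lemma norm_sphereShift {x y : E} (hx : ‖x‖ = 1) (hxy : x + y ≠ 0) :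
    ‖sphereShift y x‖ = 1 := by
  set c := (1 - ‖y‖ ^ 2) / ‖x + y‖ ^ 2
  have hc : c * ‖x + y‖ ^ 2 = 1 - ‖y‖ ^ 2 := div_mul_cancel₀ _ (by simpa using hxy)
  have hxy_sq : ‖x + y‖ ^ 2 = 1 + 2 * ⟪x, y⟫ + ‖y‖ ^ 2 := by
    rw [norm_add_sq_real, hx]; ring
  have hsq : ‖sphereShift y x‖ ^ 2 = 1 := by
    rw [sphereShift, norm_add_sq_real, norm_smul, real_inner_smul_left, inner_add_left,
      real_inner_self_eq_norm_sq, mul_pow, Real.norm_eq_abs, sq_abs]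
    linear_combination c * hc - c * hxy_sq + hc
  exact (pow_eq_one_iff_of_nonneg (norm_nonneg _) two_ne_zero).mp hsq

lemma sphereShift_neg_sphereShift {x y : E} (hy : ‖y‖ ≠ 1) (hxy : x + y ≠ 0) :
    sphereShift (-y) (sphereShift y x) = x := by
  have hs : ‖x + y‖ ^ 2 ≠ 0 := by simpa using hxy
  have hy2 : 1 - ‖y‖ ^ 2 ≠ 0 := by
    rw [sub_ne_zero, ne_comm, Ne, pow_eq_one_iff_of_nonneg (norm_nonneg y) two_ne_zero]
    exact hy
  set c := (1 - ‖y‖ ^ 2) / ‖x + y‖ ^ 2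
  have hshift : sphereShift y x + -y = c • (x + y) := add_neg_cancel_right _ y
  have hscale : (1 - ‖y‖ ^ 2) / (c ^ 2 * ‖x + y‖ ^ 2) * c = 1 := by
    simp only [c]
    field_simp
  rw [sphereShift, hshift, norm_smul, Real.norm_eq_abs, mul_pow, sq_abs, smul_smul, norm_neg,
    hscale, one_smul, add_neg_cancel_right]

lemma mapsTo_sphereShift {y : E} (hy : ‖y‖ < 1) :
    MapsTo (sphereShift y) (sphere 0 1) (sphere 0 1) := fun x hx => by
  rw [mem_sphere_zero_iff_norm] at hx ⊢
  exact norm_sphereShift hx (add_ne_zero_of_norm_lt (hx ▸ hy))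

lemma invOn_sphereShift {y : E} (hy : ‖y‖ < 1) :
    InvOn (sphereShift (-y)) (sphereShift y) (sphere 0 1) (sphere 0 1) := by
  have hy' : ‖-y‖ < 1 := by rwa [norm_neg]
  constructor
  · intro x hx
    rw [mem_sphere_zero_iff_norm] at hx
    exact sphereShift_neg_sphereShift hy.ne (add_ne_zero_of_norm_lt (hx ▸ hy))
  · intro x hx
    rw [mem_sphere_zero_iff_norm] at hx
    simpa only [neg_neg] using
      sphereShift_neg_sphereShift hy'.ne (add_ne_zero_of_norm_lt (hx ▸ hy'))

lemma bijOn_sphereShift {y : E} (hy : ‖y‖ < 1) :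
    BijOn (sphereShift y) (sphere 0 1) (sphere 0 1) :=
  (invOn_sphereShift hy).bijOn (mapsTo_sphereShift hy)
    (mapsTo_sphereShift (by rwa [norm_neg] : ‖-y‖ < 1))

end SphereShift

/-- For `y` in the open unit ball, the map `F_y(x) = ((1-|y|²)/|x+y|²)(x+y) + y`
is a bijection of the unit sphere onto itself, with `F_0` the identity. -/
theorem stmt_1 (n : ℕ) (y : EuclideanSpace ℝ (Fin (n + 1))) (hy : ‖y‖ < 1) :
    Set.BijOn (fun x : EuclideanSpace ℝ (Fin (n + 1)) =>
        ((1 - ‖y‖ ^ 2) / ‖x + y‖ ^ 2) • (x + y) + y)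
      (Metric.sphere (0 : EuclideanSpace ℝ (Fin (n + 1))) 1)
      (Metric.sphere (0 : EuclideanSpace ℝ (Fin (n + 1))) 1) ∧
    ∀ x ∈ Metric.sphere (0 : EuclideanSpace ℝ (Fin (n + 1))) 1,
      ((1 - ‖(0 : EuclideanSpace ℝ (Fin (n + 1)))‖ ^ 2) / ‖x + 0‖ ^ 2) • (x + 0) + 0 = x := by
  refine ⟨bijOn_sphereShift hy, fun x hx => ?_⟩
  rw [mem_sphere_zero_iff_norm] at hx
  simp [hx]
end

section
/- The map F_y : S^n → S^n, F_y(x) = ((1-|y|^2)/|x+y|^2)(x+y) + y with y in the open unit ball, is a conformal map: its pullback of the round metric equals ρ_y^2 times the round metric, where ρ_y(x) = (1-|y|^2)/|x+y|^2. -/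
open scoped RealInnerProductSpace

/-!
`F_y` is the inversion in the sphere of radius `√(1 - |y|²)` centred at `-y`, followed by the
translation by `2y`. The derivative of an inversion at `x` is `(R / |x - c|)²` times the
reflection in the hyperplane orthogonal to `x - c`, and a reflection preserves inner products.
-/

open EuclideanGeometry

section Inversion

variable {E : Type*} [NormedAddCommGroup E] [InnerProductSpace ℝ E]

theorem inner_fderiv_inversion {c x : E} (R : ℝ) (hx : x ≠ c) (u v : E) :
    ⟪fderiv ℝ (inversion c R) x u, fderiv ℝ (inversion c R) x v⟫ =
      ((R / dist x c) ^ 2) ^ 2 * ⟪u, v⟫ := by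
  rw [(hasFDerivAt_inversion hx).fderiv]
  simp only [FunLike.coe_smul, Pi.smul_apply, ContinuousLinearEquiv.coe_coe,
    LinearIsometryEquiv.coe_toContinuousLinearEquiv, real_inner_smul_left,
    real_inner_smul_right, LinearIsometryEquiv.inner_map_map]
  ring

theorem smul_add_add_eq_inversion {y : E} (hy : ‖y‖ ≤ 1) (p : E) :
    ((1 - ‖y‖ ^ 2) / ‖p + y‖ ^ 2) • (p + y) + y =
      inversion (-y) √(1 - ‖y‖ ^ 2) p + (2 : ℝ) • y := by
  have hR : 0 ≤ 1 - ‖y‖ ^ 2 := by nlinarith [norm_nonneg y]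
  rw [inversion, dist_eq_norm, sub_neg_eq_add, div_pow, Real.sq_sqrt hR, vsub_eq_sub,
    vadd_eq_add, sub_neg_eq_add, two_smul]
  abel

end Inversion

/-- The map `F_y` is conformal on the unit sphere: for tangent vectors `u, v` at a
point `x` of the sphere, the pullback metric is `ρ_y(x)²` times the round metric,
where `ρ_y(x) = (1-|y|²)/|x+y|²`. -/
theorem stmt_2 (n : ℕ) (y : EuclideanSpace ℝ (Fin (n + 1))) (hy : ‖y‖ < 1)
    (F : EuclideanSpace ℝ (Fin (n + 1)) → EuclideanSpace ℝ (Fin (n + 1)))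
    (hF : ∀ x, F x = ((1 - ‖y‖ ^ 2) / ‖x + y‖ ^ 2) • (x + y) + y)
    (x : EuclideanSpace ℝ (Fin (n + 1))) (hx : ‖x‖ = 1) :
    ∀ u v : EuclideanSpace ℝ (Fin (n + 1)), ⟪u, x⟫ = 0 → ⟪v, x⟫ = 0 →
      ⟪fderiv ℝ F x u, fderiv ℝ F x v⟫ = ((1 - ‖y‖ ^ 2) / ‖x + y‖ ^ 2) ^ 2 * ⟪u, v⟫ := by
  intro u v _ _
  have hx_ne : x ≠ -y := by
    rintro rfl
    rw [norm_neg] at hx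
    exact hy.ne hx
  have hF_inv : F = fun p ↦ inversion (-y) √(1 - ‖y‖ ^ 2) p + (2 : ℝ) • y :=
    funext fun p ↦ (hF p).trans (smul_add_add_eq_inversion hy.le p)
  have hR : 0 ≤ 1 - ‖y‖ ^ 2 := by nlinarith [norm_nonneg y]
  rw [hF_inv, fderiv_add_const, inner_fderiv_inversion _ hx_ne, dist_eq_norm, sub_neg_eq_add,
    div_pow, Real.sq_sqrt hR]
end
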